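/- arXiv:1805.01018 — 2 statements merged into one kernel-verified Lean document; each statement's English description precedes it below -/
import Mathlib

section
/- Let A, X be bounded operators on a reproducing kernel Hilbert space with X self-adjoint. Then ber(AX ± XA*) ≤ 2‖A‖ · ber(X²)^{1/2}. -/
/-! Since `X` is self-adjoint, `(AX)* = XA*`, so both operators are `T ± T*` with `T = AX`, whose
Berezin number is at most `2 ber T`. At a unit kernel `k`, `|⟨AXk, k⟩| ≤ ‖A‖ ‖Xk‖` and
`‖Xk‖² = ⟨X²k, k⟩ ≤ ber(X²)`. -/

variable {E : Type*} [NormedAddCommGroup E] [InnerProductSpace ℂ E] [CompleteSpace E] {Ω : Type*}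

/-- Berezin number of `A` w.r.t. the family of normalized reproducing kernels `k`. -/
noncomputable def ber (k : Ω → E) (A : E →L[ℂ] E) : ℝ :=
  ⨆ p : Ω, ‖(inner ℂ (A (k p)) (k p) : ℂ)‖

noncomputable def adj (A : E →L[ℂ] E) : E →L[ℂ] E := ContinuousLinearMap.adjoint A

/-- Real part `(T + T*)/2`. -/
noncomputable def reOp (T : E →L[ℂ] E) : E →L[ℂ] E := (2 : ℂ)⁻¹ • (T + adj T)

/-- Imaginary part `(T - T*)/(2i)`. -/
noncomputable def imOp (T : E →L[ℂ] E) : E →L[ℂ] E := (2 * Complex.I)⁻¹ • (T - adj T)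

/-- `|X| = (X*X)^{1/2}`. -/
noncomputable def absOp (X : E →L[ℂ] E) : E →L[ℂ] E := CFC.sqrt (adj X * X)

section

variable {H : Type*} [NormedAddCommGroup H] [InnerProductSpace ℂ H]

lemma ber_nonneg (k : Ω → H) (T : H →L[ℂ] H) : 0 ≤ ber k T :=
  Real.iSup_nonneg fun _ => norm_nonneg _

lemma ber_le {k : Ω → H} {T : H →L[ℂ] H} {c : ℝ} (hc : 0 ≤ c)
    (h : ∀ p, ‖(inner ℂ (T (k p)) (k p) : ℂ)‖ ≤ c) : ber k T ≤ c :=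
  Real.iSup_le h hc

lemma norm_inner_apply_le_ber {k : Ω → H} (hk : ∀ p, ‖k p‖ ≤ 1) (T : H →L[ℂ] H) (p : Ω) :
    ‖(inner ℂ (T (k p)) (k p) : ℂ)‖ ≤ ber k T := by
  refine le_ciSup (f := fun p => ‖(inner ℂ (T (k p)) (k p) : ℂ)‖) ⟨‖T‖, ?_⟩ p
  rintro _ ⟨q, rfl⟩
  calc ‖(inner ℂ (T (k q)) (k q) : ℂ)‖ ≤ ‖T‖ * ‖k q‖ * ‖k q‖ :=
        (norm_inner_le_norm _ _).trans (by gcongr; exact T.le_opNorm _)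
    _ ≤ ‖T‖ * 1 * 1 := by gcongr <;> exact hk q
    _ = ‖T‖ := by ring

end

lemma adj_mul_of_adj_eq {A X : E →L[ℂ] E} (hX : adj X = X) : adj (A * X) = X * adj A := by
  rw [adj, ContinuousLinearMap.mul_def, ContinuousLinearMap.adjoint_comp, ← adj, hX]
  rfl

lemma norm_inner_adj_apply (T : E →L[ℂ] E) (x : E) :
    ‖(inner ℂ (adj T x) x : ℂ)‖ = ‖(inner ℂ (T x) x : ℂ)‖ := by
  rw [adj, ContinuousLinearMap.adjoint_inner_left, norm_inner_symm]

lemma ber_add_adj_le {k : Ω → E} (hk : ∀ p, ‖k p‖ ≤ 1) (T : E →L[ℂ] E) :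
    ber k (T + adj T) ≤ 2 * ber k T := by
  refine ber_le (by linarith [ber_nonneg k T]) fun p => ?_
  calc ‖(inner ℂ ((T + adj T) (k p)) (k p) : ℂ)‖
      ≤ ‖(inner ℂ (T (k p)) (k p) : ℂ)‖ + ‖(inner ℂ (adj T (k p)) (k p) : ℂ)‖ := by
        rw [add_apply, inner_add_left]; exact norm_add_le _ _
    _ ≤ 2 * ber k T := by
        rw [norm_inner_adj_apply]; linarith [norm_inner_apply_le_ber hk T p]

lemma ber_sub_adj_le {k : Ω → E} (hk : ∀ p, ‖k p‖ ≤ 1) (T : E →L[ℂ] E) :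
    ber k (T - adj T) ≤ 2 * ber k T := by
  refine ber_le (by linarith [ber_nonneg k T]) fun p => ?_
  calc ‖(inner ℂ ((T - adj T) (k p)) (k p) : ℂ)‖
      ≤ ‖(inner ℂ (T (k p)) (k p) : ℂ)‖ + ‖(inner ℂ (adj T (k p)) (k p) : ℂ)‖ := by
        rw [sub_apply, inner_sub_left]; exact norm_sub_le _ _
    _ ≤ 2 * ber k T := by
        rw [norm_inner_adj_apply]; linarith [norm_inner_apply_le_ber hk T p]

lemma norm_inner_mul_self_apply_of_adj_eq {X : E →L[ℂ] E} (hX : adj X = X) (x : E) :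
    ‖(inner ℂ ((X * X) x) x : ℂ)‖ = ‖X x‖ ^ 2 := by
  have h := ContinuousLinearMap.adjoint_inner_left X x (X x)
  rw [← adj, hX] at h
  rw [mul_apply_eq_comp, h, inner_self_eq_norm_sq_to_K]
  simp

lemma norm_apply_le_sqrt_ber {k : Ω → E} (hk : ∀ p, ‖k p‖ ≤ 1) {X : E →L[ℂ] E}
    (hX : adj X = X) (p : Ω) : ‖X (k p)‖ ≤ √(ber k (X * X)) := by
  rw [Real.le_sqrt (norm_nonneg _) (ber_nonneg k _), ← norm_inner_mul_self_apply_of_adj_eq hX]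
  exact norm_inner_apply_le_ber hk _ p

lemma ber_mul_le {k : Ω → E} (hk : ∀ p, ‖k p‖ ≤ 1) (A : E →L[ℂ] E) {X : E →L[ℂ] E}
    (hX : adj X = X) : ber k (A * X) ≤ ‖A‖ * √(ber k (X * X)) := by
  refine ber_le (by positivity) fun p => ?_
  calc ‖(inner ℂ ((A * X) (k p)) (k p) : ℂ)‖ ≤ ‖A‖ * ‖X (k p)‖ * ‖k p‖ :=
        (norm_inner_le_norm _ _).trans (by gcongr; exact A.le_opNorm _)
    _ ≤ ‖A‖ * √(ber k (X * X)) * 1 := by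
        gcongr
        exacts [norm_apply_le_sqrt_ber hk hX p, hk p]
    _ = ‖A‖ * √(ber k (X * X)) := mul_one _

theorem stmt4 (k : Ω → E) (hk : ∀ p, ‖k p‖ = 1) (A X : E →L[ℂ] E) (hX : adj X = X) :
    ber k (A * X + X * adj A) ≤ 2 * ‖A‖ * Real.sqrt (ber k (X * X)) ∧
    ber k (A * X - X * adj A) ≤ 2 * ‖A‖ * Real.sqrt (ber k (X * X)) := by
  have hk' : ∀ p, ‖k p‖ ≤ 1 := fun p => (hk p).le
  have hAX := ber_mul_le hk' A hX
  rw [← adj_mul_of_adj_eq hX, mul_assoc]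
  exact ⟨(ber_add_adj_le hk' _).trans (by linarith), (ber_sub_adj_le hk' _).trans (by linarith)⟩
end

section
/- For bounded operators A, X on a reproducing kernel Hilbert space, ber(AX ± XA) ≤ ber(A*A + X*X)^{1/2} · ber(AA* + XX*)^{1/2}. -/
variable {E : Type*} [NormedAddCommGroup E] [InnerProductSpace ℂ E] [CompleteSpace E] {Ω : Type*}

/-! For a unit vector `u`, `⟨(AX ± XA)u, u⟩ = ⟨Xu, A*u⟩ ± ⟨Au, X*u⟩`, so its modulus is at most
`‖Xu‖‖A*u‖ + ‖Au‖‖X*u‖`. Cauchy–Schwarz in `ℝ²` bounds this by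
`(‖Au‖² + ‖Xu‖²)^{1/2} (‖A*u‖² + ‖X*u‖²)^{1/2}`, and these two sums of squares are exactly
`⟨(A*A + X*X)u, u⟩` and `⟨(AA* + XX*)u, u⟩`, each at most the corresponding Berezin number. -/

lemma mul_add_mul_le_sqrt_mul_sqrt (a b c d : ℝ) :
    a * b + c * d ≤ √(a ^ 2 + c ^ 2) * √(b ^ 2 + d ^ 2) := by
  rw [← Real.sqrt_mul (by positivity)]
  exact Real.le_sqrt_of_sq_le (by nlinarith [sq_nonneg (a * d - b * c)])

lemma adj_adj (A : E →L[ℂ] E) : adj (adj A) = A :=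
  ContinuousLinearMap.adjoint_adjoint A

lemma inner_adj_mul_self_add_apply (A X : E →L[ℂ] E) (u : E) :
    inner ℂ ((adj A * A + adj X * X) u) u = ((‖A u‖ ^ 2 + ‖X u‖ ^ 2 : ℝ) : ℂ) := by
  simp only [add_apply, mul_apply_eq_comp, inner_add_left, adj,
    ContinuousLinearMap.adjoint_inner_left, inner_self_eq_norm_sq_to_K]
  push_cast
  rfl

lemma norm_inner_mul_apply_le (A X : E →L[ℂ] E) (u : E) :
    ‖inner ℂ ((A * X) u) u‖ ≤ ‖X u‖ * ‖adj A u‖ := by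
  rw [mul_apply_eq_comp, adj, ← ContinuousLinearMap.adjoint_inner_right]
  exact norm_inner_le_norm _ _

omit [CompleteSpace E] in
lemma ber_bddAbove (k : Ω → E) (hk : ∀ p, ‖k p‖ ≤ 1) (T : E →L[ℂ] E) :
    BddAbove (Set.range fun p ↦ ‖inner ℂ (T (k p)) (k p)‖) := by
  refine ⟨‖T‖, ?_⟩
  rintro _ ⟨p, rfl⟩
  calc ‖inner ℂ (T (k p)) (k p)‖ ≤ ‖T‖ * ‖k p‖ * ‖k p‖ :=
        (norm_inner_le_norm _ _).trans (by gcongr; exact T.le_opNorm _)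
    _ ≤ ‖T‖ * 1 * 1 := by gcongr <;> exact hk p
    _ = ‖T‖ := by ring

omit [CompleteSpace E] in
lemma norm_inner_le_ber (k : Ω → E) (hk : ∀ p, ‖k p‖ ≤ 1) (T : E →L[ℂ] E) (p : Ω) :
    ‖inner ℂ (T (k p)) (k p)‖ ≤ ber k T :=
  le_ciSup (ber_bddAbove k hk T) p

lemma norm_sq_add_norm_sq_le_ber (k : Ω → E) (hk : ∀ p, ‖k p‖ ≤ 1) (A X : E →L[ℂ] E) (p : Ω) :
    ‖A (k p)‖ ^ 2 + ‖X (k p)‖ ^ 2 ≤ ber k (adj A * A + adj X * X) := by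
  have h := norm_inner_le_ber k hk (adj A * A + adj X * X) p
  rwa [inner_adj_mul_self_add_apply, Complex.norm_real, Real.norm_of_nonneg (by positivity)] at h

lemma norm_inner_mul_apply_add_norm_inner_mul_apply_le (k : Ω → E) (hk : ∀ p, ‖k p‖ ≤ 1)
    (A X : E →L[ℂ] E) (p : Ω) :
    ‖inner ℂ ((A * X) (k p)) (k p)‖ + ‖inner ℂ ((X * A) (k p)) (k p)‖ ≤
      √(ber k (adj A * A + adj X * X)) * √(ber k (A * adj A + X * adj X)) := by
  set u := k p
  have hAX := norm_sq_add_norm_sq_le_ber k hk A X p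
  have hAX_adj := norm_sq_add_norm_sq_le_ber k hk (adj A) (adj X) p
  rw [adj_adj, adj_adj, add_comm] at hAX_adj
  calc ‖inner ℂ ((A * X) u) u‖ + ‖inner ℂ ((X * A) u) u‖
      ≤ ‖A u‖ * ‖adj X u‖ + ‖X u‖ * ‖adj A u‖ := by
        rw [add_comm]
        exact add_le_add (norm_inner_mul_apply_le X A u) (norm_inner_mul_apply_le A X u)
    _ ≤ √(‖A u‖ ^ 2 + ‖X u‖ ^ 2) * √(‖adj X u‖ ^ 2 + ‖adj A u‖ ^ 2) :=
        mul_add_mul_le_sqrt_mul_sqrt _ _ _ _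
    _ ≤ _ := by gcongr

theorem stmt7 (k : Ω → E) (hk : ∀ p, ‖k p‖ = 1) (A X : E →L[ℂ] E) :
    ber k (A * X + X * A) ≤ Real.sqrt (ber k (adj A * A + adj X * X)) * Real.sqrt (ber k (A * adj A + X * adj X)) ∧
    ber k (A * X - X * A) ≤ Real.sqrt (ber k (adj A * A + adj X * X)) * Real.sqrt (ber k (A * adj A + X * adj X)) := by
  have key := norm_inner_mul_apply_add_norm_inner_mul_apply_le k (fun p ↦ (hk p).le) A X
  constructor
  · refine Real.iSup_le (fun p ↦ ?_) (by positivity)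
    rw [add_apply, inner_add_left]
    exact (norm_add_le _ _).trans (key p)
  · refine Real.iSup_le (fun p ↦ ?_) (by positivity)
    rw [sub_apply, inner_sub_left]
    exact (norm_sub_le _ _).trans (key p)
end
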